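/- The septic normalized proper Zolotarev polynomial Z at parameter t = −21 has uniform norm 1 on the union of intervals [−1, 1] ∪ [α, β]: one has |Z(x)| ≤ 1 for every x ∈ [−1, 1] ∪ [α, β], and there exists x ∈ [−1, 1] with |Z(x)| = 1. -/

import Mathlib

noncomputable section

def b0 : ℝ := (5236829509 - 598896224 * Real.sqrt 6) / 6591796875

def b1 : ℝ :=
  -(16 / 6591796875) * Real.sqrt (2 * (1174132032293998751 + 484070220858892414 * Real.sqrt 6))

def b2 : ℝ := -(8 / 2197265625) * (1876889773 + 537098572 * Real.sqrt 6)

def b3 : ℝ :=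
  (16 / 6591796875) * Real.sqrt (2 * (56229826406521238759 + 22960487256932311726 * Real.sqrt 6))

def b4 : ℝ := (8 / 6591796875) * (13748181869 + 5603740016 * Real.sqrt 6)

def b5 : ℝ :=
  -(32 / 2197265625) * Real.sqrt (2 * (4907729982259476719 + 2003572376153817166 * Real.sqrt 6))

def b6 : ℝ := -(256 / 6591796875) * (299877839 + 122424446 * Real.sqrt 6)

def b7 : ℝ :=
  (1024 / 6591796875) * Real.sqrt (2 * (11553696783009431 + 4716776960201434 * Real.sqrt 6))

/-- The septic normalized proper Zolotarev polynomial at parameter t = −21. -/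
def Z (x : ℝ) : ℝ :=
  b0 + b1 * x + b2 * x ^ 2 + b3 * x ^ 3 + b4 * x ^ 4 + b5 * x ^ 5 + b6 * x ^ 6 + b7 * x ^ 7

def α : ℝ := (1 / 4) * Real.sqrt ((-1816103 + 742750 * Real.sqrt 6) / 142)

def β : ℝ := (1 / 4) * Real.sqrt ((-330503 + 136350 * Real.sqrt 6) / 142)

/-!
`Z` solves the Pell–Abel equation `1 - Z² = w (1 - x²) (x - α) (x - β) Q²` with a constant
`w > 0`, a quintic `Q` and `α, β ≥ 1`. Since `(1 - x²) (x - α) (x - β) ≥ 0` on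
`[-1, 1] ∪ [α, β]`, `|Z| ≤ 1` there, and the right-hand side vanishes at `x = 1`.

Everything lives in `ℚ(√6, τ)` with `τ = √(2 (11553696783009431 + 4716776960201434 √6))`:
`b7`, and after denesting also `b1, b3, b5` and `α + β`, are `ℚ(√6)`-multiples of `τ`. The
identity is then a polynomial identity modulo `√6 ^ 2 = 6` and `τ ^ 2 = 2 (…)`.
-/

open Set

lemma le_mul_sqrt_of_sq_le {a b c : ℝ} (hb : 0 ≤ b) (h : a ^ 2 ≤ b ^ 2 * c) : a ≤ b * √c :=
  calc a ≤ |a| := le_abs_self a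
    _ ≤ √(b ^ 2 * c) := Real.abs_le_sqrt h
    _ = b * √c := by rw [Real.sqrt_mul (sq_nonneg b), Real.sqrt_sq hb]

lemma mul_sqrt_le_of_sq_le {a b c : ℝ} (ha : 0 ≤ a) (h : b ^ 2 * c ≤ a ^ 2) : b * √c ≤ a :=
  calc b * √c ≤ |b| * √c := by gcongr; exact le_abs_self b
    _ = √(b ^ 2 * c) := by rw [Real.sqrt_mul (sq_nonneg b), Real.sqrt_sq_eq_abs]
    _ ≤ √(a ^ 2) := Real.sqrt_le_sqrt h
    _ = a := Real.sqrt_sq ha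

lemma abs_le_one_of_one_sub_sq_eq {f g : ℝ → ℝ} {a b c : ℝ} (hc : 0 ≤ c) (ha : 1 ≤ a) (hb : 1 ≤ b)
    (h : ∀ x, 1 - f x ^ 2 = (1 - x ^ 2) * ((x - a) * (x - b)) * c * g x ^ 2) :
    ∀ x ∈ Icc (-1) 1 ∪ Icc a b, |f x| ≤ 1 := by
  intro x hx
  have hsign : 0 ≤ (1 - x ^ 2) * ((x - a) * (x - b)) := by
    rcases hx with ⟨hx₁, hx₂⟩ | ⟨hxa, hxb⟩
    · exact mul_nonneg (by nlinarith) (mul_nonneg_of_nonpos_of_nonpos (by linarith) (by linarith))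
    · exact mul_nonneg_of_nonpos_of_nonpos (by nlinarith)
        (mul_nonpos_of_nonneg_of_nonpos (by linarith) (by linarith))
  rw [← sq_le_one_iff_abs_le_one, ← sub_nonneg, h]
  positivity

local notation "τ" => √(2 * (11553696783009431 + 4716776960201434 * √6))

lemma sq_sqrt_six : √6 ^ 2 = 6 := Real.sq_sqrt (by norm_num)

lemma τ_sq : τ ^ 2 = 2 * (11553696783009431 + 4716776960201434 * √6) := Real.sq_sqrt (by positivity)

lemma b1_eq : b1 = -(16 / 6591796875) * ((547162153751 - 223377993078 * √6) / 5041 * τ) := by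
  have hr : 0 ≤ (547162153751 - 223377993078 * √6) / 5041 :=
    div_nonneg (sub_nonneg.2 (mul_sqrt_le_of_sq_le (by norm_num) (by norm_num))) (by norm_num)
  have hsq : 2 * (1174132032293998751 + 484070220858892414 * √6) =
      ((547162153751 - 223377993078 * √6) / 5041 * τ) ^ 2 := by
    have hu := sq_sqrt_six
    have ht := τ_sq
    -- `ring_nf` would rewrite the numerals under the square roots, after which `hu` and `ht` no
    -- longer match; so `τ` and `√6` are made atoms first.
    generalize τ = t at ht ⊢
    generalize √6 = u at hu ht ⊢
    ring_nf
    simp only [hu, ht]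
    ring_nf
    simp only [hu]
    ring_nf
  rw [b1, hsq, Real.sqrt_sq (mul_nonneg hr (Real.sqrt_nonneg _))]

lemma b3_eq : b3 = 16 / 6591796875 * ((548543689501 - 223941879906 * √6) / 5041 * τ) := by
  have hr : 0 ≤ (548543689501 - 223941879906 * √6) / 5041 :=
    div_nonneg (sub_nonneg.2 (mul_sqrt_le_of_sq_le (by norm_num) (by norm_num))) (by norm_num)
  have hsq : 2 * (56229826406521238759 + 22960487256932311726 * √6) =
      ((548543689501 - 223941879906 * √6) / 5041 * τ) ^ 2 := by
    have hu := sq_sqrt_six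
    have ht := τ_sq
    generalize τ = t at ht ⊢
    generalize √6 = u at hu ht ⊢
    ring_nf
    simp only [hu, ht]
    ring_nf
    simp only [hu]
    ring_nf
  rw [b3, hsq, Real.sqrt_sq (mul_nonneg hr (Real.sqrt_nonneg _))]

lemma b5_eq : b5 = -(32 / 2197265625) * ((3243799 - 1323678 * √6) / 71 * τ) := by
  have hr : 0 ≤ (3243799 - 1323678 * √6) / 71 :=
    div_nonneg (sub_nonneg.2 (mul_sqrt_le_of_sq_le (by norm_num) (by norm_num))) (by norm_num)
  have hsq : 2 * (4907729982259476719 + 2003572376153817166 * √6) =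
      ((3243799 - 1323678 * √6) / 71 * τ) ^ 2 := by
    have hu := sq_sqrt_six
    have ht := τ_sq
    generalize τ = t at ht ⊢
    generalize √6 = u at hu ht ⊢
    ring_nf
    simp only [hu, ht]
    ring_nf
    simp only [hu]
    ring_nf
  rw [b5, hsq, Real.sqrt_sq (mul_nonneg hr (Real.sqrt_nonneg _))]

lemma α_sq : α ^ 2 = (-1816103 + 742750 * √6) / 2272 := by
  have h : 1816103 ≤ 742750 * √6 := le_mul_sqrt_of_sq_le (by norm_num) (by norm_num)
  rw [α, mul_pow, Real.sq_sqrt (by linarith)]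
  ring

lemma β_sq : β ^ 2 = (-330503 + 136350 * √6) / 2272 := by
  have h : 330503 ≤ 136350 * √6 := le_mul_sqrt_of_sq_le (by norm_num) (by norm_num)
  rw [β, mul_pow, Real.sq_sqrt (by linarith)]
  ring

lemma α_nonneg : 0 ≤ α := by unfold α; positivity

lemma β_nonneg : 0 ≤ β := by unfold β; positivity

lemma one_le_α : 1 ≤ α := by
  have h : 1818375 ≤ 742750 * √6 := le_mul_sqrt_of_sq_le (by norm_num) (by norm_num)
  rw [← one_le_sq_iff₀ α_nonneg, α_sq, le_div_iff₀ (by norm_num)]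
  linarith

lemma one_le_β : 1 ≤ β := by
  have h : 332775 ≤ 136350 * √6 := le_mul_sqrt_of_sq_le (by norm_num) (by norm_num)
  rw [← one_le_sq_iff₀ β_nonneg, β_sq, le_div_iff₀ (by norm_num)]
  linarith

lemma α_mul_β : α * β = (-775447 + 317950 * √6) / 2272 := by
  have h : 775447 ≤ 317950 * √6 := le_mul_sqrt_of_sq_le (by norm_num) (by norm_num)
  rw [← sq_eq_sq₀ (mul_nonneg α_nonneg β_nonneg) (by linarith), mul_pow, α_sq, β_sq]
  linear_combination (2500 / 71) * sq_sqrt_six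

lemma α_add_β : α + β = (-4137518493 + 1689134852 * √6) / 101646724 * τ := by
  have h : 4137518493 ≤ 1689134852 * √6 := le_mul_sqrt_of_sq_le (by norm_num) (by norm_num)
  rw [← sq_eq_sq₀ (add_nonneg α_nonneg β_nonneg)
    (mul_nonneg (div_nonneg (by linarith) (by norm_num)) (Real.sqrt_nonneg _)), add_sq, α_sq, β_sq,
    mul_assoc, α_mul_β]
  have hu := sq_sqrt_six
  have ht := τ_sq
  generalize τ = t at ht ⊢
  generalize √6 = u at hu ht ⊢
  ring_nf
  simp only [hu, ht]
  ring_nf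
  simp only [hu]
  ring_nf

-- `w` and `Q` come from factoring `1 - Z ^ 2` over `ℚ(√6, τ)`.
def w : ℝ := (24229858315881794240512 + 9891798235640357715968 * √6) / 43451786041259765625

def Q (x : ℝ) : ℝ :=
  (9491220834094559591 / 204960454273600 - 968693669983524031 / 51240113568400 * √6) * τ +
    (114476646101 / 322624 - 23367440489 / 161312 * √6) * x +
    (-51568141829943527 / 721691740400 + 5263151436118007 / 180422935100 * √6) * τ * x ^ 2 +
    (-5941175 / 2272 + 1212367 / 1136 * √6) * x ^ 3 +
    (215733026317 / 2541168100 - 22018159797 / 635292025 * √6) * τ * x ^ 4 +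
    x ^ 5

lemma w_nonneg : 0 ≤ w := by unfold w; positivity

lemma one_sub_Z_sq (x : ℝ) : 1 - Z x ^ 2 = (1 - x ^ 2) * ((x - α) * (x - β)) * w * Q x ^ 2 := by
  have hαβ : (x - α) * (x - β) = x ^ 2 - (α + β) * x + α * β := by ring
  rw [hαβ, α_add_β, α_mul_β, Z, b1_eq, b3_eq, b5_eq, b0, b2, b4, b6, b7, w, Q]
  have hu := sq_sqrt_six
  have ht := τ_sq
  generalize τ = t at ht ⊢
  generalize √6 = u at hu ht ⊢
  have ht3 : t ^ 3 = 2 * (11553696783009431 + 4716776960201434 * u) * t := by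
    linear_combination t * ht
  have hu3 : u ^ 3 = 6 * u := by linear_combination u * hu
  have hu4 : u ^ 4 = 36 := by linear_combination (u ^ 2 + 6) * hu
  have hu5 : u ^ 5 = 36 * u := by linear_combination (u ^ 3 + 6 * u) * hu
  ring_nf
  simp only [ht, ht3]
  ring_nf
  simp only [hu, hu3, hu4, hu5]
  ring_nf

/-- Z has uniform norm 1 on [−1, 1] ∪ [α, β]: |Z(x)| ≤ 1 there, and the
value 1 is attained at some point of [−1, 1]. -/
theorem stmt10 :
    (∀ x ∈ Set.Icc (-1 : ℝ) 1 ∪ Set.Icc α β, |Z x| ≤ 1) ∧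
    (∃ x ∈ Set.Icc (-1 : ℝ) 1, |Z x| = 1) := by
  refine ⟨abs_le_one_of_one_sub_sq_eq w_nonneg one_le_α one_le_β one_sub_Z_sq, 1, by norm_num, ?_⟩
  have h : Z 1 ^ 2 = 1 := by linarith [one_sub_Z_sq 1, show (1 : ℝ) - 1 ^ 2 = 0 by norm_num]
  rw [← abs_pow_eq_one _ two_ne_zero, h, abs_one]
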